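/- Let 1 < b < n be integers with b dividing n, and let M ∈ MM*(b,n) over 𝔽 ∈ {ℝ, ℂ}. Then there exist matrices L₁, L₂ ∈ BD(n/b, n) and R ∈ BD(b, n) such that M = (Pᵀ L₁ P) · R · (Pᵀ L₂ P), where P = P_{(b,n)}. -/

import Mathlib

open Matrix

/-- `BD b n R`: `R` is block-diagonal with `n/b` diagonal blocks of size `b × b`. -/
def BD {𝔽 : Type*} [RCLike 𝔽] (b n : ℕ) (R : Matrix (Fin n) (Fin n) 𝔽) : Prop :=
  ∀ i j : Fin n, i.val / b ≠ j.val / b → R i j = 0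

/-- `DB b n L`: `L[i,j] = 0` whenever `i ≢ j (mod b)`. -/
def DB {𝔽 : Type*} [RCLike 𝔽] (b n : ℕ) (L : Matrix (Fin n) (Fin n) 𝔽) : Prop :=
  ∀ i j : Fin n, i.val % b ≠ j.val % b → L i j = 0

/-- The permutation matrix `P_{(b,n)}`. -/
def permMat (𝔽 : Type*) [RCLike 𝔽] (b n : ℕ) : Matrix (Fin n) (Fin n) 𝔽 :=
  Matrix.of fun i j => if i.val = j.val % b * (n / b) + j.val / b then 1 else 0

/-- The Monarch class `M(b,n) = { L·R : L ∈ DB(b,n), R ∈ BD(b,n) }`. -/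
def MonarchClass {𝔽 : Type*} [RCLike 𝔽] (b n : ℕ) (M : Matrix (Fin n) (Fin n) 𝔽) : Prop :=
  ∃ L R : Matrix (Fin n) (Fin n) 𝔽, DB b n L ∧ BD b n R ∧ M = L * R

/-- `MM*(b,n) = { M₁·M₂* : M₁, M₂ ∈ M(b,n) }`. -/
def MMstar {𝔽 : Type*} [RCLike 𝔽] (b n : ℕ) (M : Matrix (Fin n) (Fin n) 𝔽) : Prop :=
  ∃ M₁ M₂ : Matrix (Fin n) (Fin n) 𝔽,
    MonarchClass b n M₁ ∧ MonarchClass b n M₂ ∧ M = M₁ * M₂ᴴ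

/-!
Conjugating by `P = P_{(b,n)}` relabels indices by the grid transposition `σ`, under which
`i mod b` becomes `⌊σ i / (n/b)⌋`; so `P L Pᵀ ∈ BD(n/b, n)` for every `L ∈ DB(b, n)`, and
`L = Pᵀ (P L Pᵀ) P`. Writing `M = L₁ R₁ (L₂ R₂)ᴴ = L₁ (R₁ R₂ᴴ) L₂ᴴ`, with `BD(b, n)` closed under
products and `ᴴ` and `DB(b, n)` closed under `ᴴ`, gives the decomposition.
-/

section

variable {𝔽 : Type*} [RCLike 𝔽] {b n : ℕ}

theorem BD.mul {A B : Matrix (Fin n) (Fin n) 𝔽} (hA : BD b n A) (hB : BD b n B) :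
    BD b n (A * B) := by
  intro i j hij
  rw [mul_apply]
  refine Finset.sum_eq_zero fun k _ => ?_
  by_cases hik : i.val / b = k.val / b
  · rw [hB k j (hik ▸ hij), mul_zero]
  · rw [hA i k hik, zero_mul]

theorem BD.conjTranspose {A : Matrix (Fin n) (Fin n) 𝔽} (hA : BD b n A) : BD b n Aᴴ :=
  fun i j hij => by rw [conjTranspose_apply, hA j i hij.symm, star_zero]

theorem DB.conjTranspose {A : Matrix (Fin n) (Fin n) 𝔽} (hA : DB b n A) : DB b n Aᴴ :=
  fun i j hij => by rw [conjTranspose_apply, hA j i hij.symm, star_zero]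

/-- The permutation `σ_{(b,n)}`, read as transposing the `(n/b) × b` grid of indices
`i = i₁ * b + i₀`. -/
def gridTranspose (h : b ∣ n) : Equiv.Perm (Fin n) :=
  (finCongr (Nat.div_mul_cancel h).symm).trans <|
    finProdFinEquiv.symm.trans <| (Equiv.prodComm _ _).trans <|
      finProdFinEquiv.trans (finCongr (Nat.mul_div_cancel' h))

theorem gridTranspose_apply_val (h : b ∣ n) (j : Fin n) :
    (gridTranspose h j : ℕ) = j % b * (n / b) + j / b := by
  simp [gridTranspose]
  ring

theorem gridTranspose_symm_apply_val_mod (h : b ∣ n) (i : Fin n) :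
    ((gridTranspose h).symm i : ℕ) % b = i / (n / b) := by
  have hlt : (i : ℕ) / (n / b) < b :=
    Nat.div_lt_of_lt_mul (by rw [Nat.div_mul_cancel h]; exact i.isLt)
  simp [gridTranspose, Nat.mod_eq_of_lt hlt]

theorem permMat_eq_transpose_toMatrix (h : b ∣ n) :
    permMat 𝔽 b n = ((gridTranspose h).toPEquiv.toMatrix)ᵀ := by
  ext i j
  simp [permMat, PEquiv.toMatrix_apply, Fin.ext_iff, gridTranspose_apply_val, eq_comm]

theorem transpose_permMat_mul_mul_permMat (h : b ∣ n) (L : Matrix (Fin n) (Fin n) 𝔽) :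
    (permMat 𝔽 b n)ᵀ * L * permMat 𝔽 b n = L.submatrix (gridTranspose h) (gridTranspose h) := by
  rw [permMat_eq_transpose_toMatrix h, transpose_transpose, ← PEquiv.toMatrix_symm,
    ← Equiv.toPEquiv_symm, PEquiv.toMatrix_toPEquiv_mul, PEquiv.mul_toMatrix_toPEquiv,
    submatrix_submatrix, Equiv.symm_symm]
  rfl

theorem transpose_permMat_mul_submatrix_symm_mul_permMat (h : b ∣ n)
    (A : Matrix (Fin n) (Fin n) 𝔽) :
    (permMat 𝔽 b n)ᵀ * A.submatrix (gridTranspose h).symm (gridTranspose h).symm *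
      permMat 𝔽 b n = A := by
  rw [transpose_permMat_mul_mul_permMat h, submatrix_submatrix, Equiv.symm_comp_self,
    submatrix_id_id]

theorem DB.bd_submatrix_gridTranspose_symm (h : b ∣ n) {A : Matrix (Fin n) (Fin n) 𝔽}
    (hA : DB b n A) :
    BD (n / b) n (A.submatrix (gridTranspose h).symm (gridTranspose h).symm) := fun i j hij =>
  hA _ _ (by rwa [gridTranspose_symm_apply_val_mod, gridTranspose_symm_apply_val_mod])

end

theorem mmstar_decomposition_general {𝔽 : Type*} [RCLike 𝔽] (b n : ℕ)
    (hdvd : b ∣ n)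
    (M : Matrix (Fin n) (Fin n) 𝔽) (hM : MMstar b n M) :
    ∃ L₁ L₂ R : Matrix (Fin n) (Fin n) 𝔽,
      BD (n / b) n L₁ ∧ BD (n / b) n L₂ ∧ BD b n R ∧
      M = ((permMat 𝔽 b n)ᵀ * L₁ * permMat 𝔽 b n) * R *
          ((permMat 𝔽 b n)ᵀ * L₂ * permMat 𝔽 b n) := by
  obtain ⟨M₁, M₂, ⟨A₁, R₁, hA₁, hR₁, rfl⟩, ⟨A₂, R₂, hA₂, hR₂, rfl⟩, rfl⟩ := hM
  refine ⟨A₁.submatrix (gridTranspose hdvd).symm (gridTranspose hdvd).symm,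
    A₂ᴴ.submatrix (gridTranspose hdvd).symm (gridTranspose hdvd).symm, R₁ * R₂ᴴ,
    hA₁.bd_submatrix_gridTranspose_symm hdvd,
    hA₂.conjTranspose.bd_submatrix_gridTranspose_symm hdvd, hR₁.mul hR₂.conjTranspose, ?_⟩
  rw [transpose_permMat_mul_submatrix_symm_mul_permMat,
    transpose_permMat_mul_submatrix_symm_mul_permMat, conjTranspose_mul]
  simp only [Matrix.mul_assoc]

/-- every `M ∈ MM*(b,n)` can be written as
`(Pᵀ L₁ P) · R · (Pᵀ L₂ P)` with `L₁, L₂ ∈ BD(n/b, n)` and `R ∈ BD(b,n)`. -/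
theorem mmstar_decomposition {𝔽 : Type*} [RCLike 𝔽] (b n : ℕ)
    (hb : 1 < b) (hbn : b < n) (hdvd : b ∣ n)
    (M : Matrix (Fin n) (Fin n) 𝔽) (hM : MMstar b n M) :
    ∃ L₁ L₂ R : Matrix (Fin n) (Fin n) 𝔽,
      BD (n / b) n L₁ ∧ BD (n / b) n L₂ ∧ BD b n R ∧
      M = ((permMat 𝔽 b n)ᵀ * L₁ * permMat 𝔽 b n) * R *
          ((permMat 𝔽 b n)ᵀ * L₂ * permMat 𝔽 b n) :=
  mmstar_decomposition_general b n hdvd M hM
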